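/- arXiv:2108.03807 — 6 statements merged into one kernel-verified Lean document; each statement's English description precedes it below -/
import Mathlib

section
/- Let L = diag(l₁, l₂) and D = diag(d₁, d₂) and K = diag(k₁, k₂) be 2×2 real diagonal matrices with l₁, l₂, d₁, d₂, k₁, k₂ > 0, and let H be a 2×2 real symmetric positive definite matrix. Set P = D·H·K. Then every complex number z satisfying det(z²·I₂ + z·L + P) = 0 has strictly negative real part. -/
/-!
Left multiplication by the positive diagonal matrix `D⁻¹K` symmetrizes the pencil: it becomes
`z² D⁻¹K + z D⁻¹KL + KHK`, whose three coefficients are positive definite. Pairing with a kernel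
vector `v` gives `a z² + b z + c = 0` with `a, b, c > 0`, and multiplying by `conj z` shows
`(a |z|² + c) Re z = -b |z|² < 0`.
-/

open Matrix
open scoped ComplexOrder

theorem Complex.re_neg_of_quadratic_eq_zero {a b c z : ℂ} (ha : 0 < a) (hb : 0 < b) (hc : 0 < c)
    (h : a * z ^ 2 + b * z + c = 0) : z.re < 0 := by
  obtain ⟨ha, ha'⟩ := pos_iff.1 ha
  obtain ⟨hb, hb'⟩ := pos_iff.1 hb
  obtain ⟨hc, hc'⟩ := pos_iff.1 hc
  have hre := congrArg re h
  have him := congrArg im h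
  simp only [pow_two, add_re, add_im, mul_re, mul_im, ← ha', ← hb', ← hc', zero_re,
    zero_im] at hre him
  have hz : z ≠ 0 := by
    rintro rfl
    simp only [ne_eq, OfNat.ofNat_ne_zero, not_false_eq_true, zero_pow, mul_zero, zero_add] at h
    simp [h] at hc
  have key : (a.re * normSq z + c.re) * z.re = -(b.re * normSq z) := by
    rw [normSq_apply]
    linear_combination z.re * hre + z.im * him
  refine neg_of_mul_neg_right (a := a.re * normSq z + c.re) ?_
    (add_pos (mul_pos ha (normSq_pos.2 hz)) hc).le
  rw [key, neg_neg_iff_pos]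
  exact mul_pos hb (normSq_pos.2 hz)

theorem Matrix.PosDef.map_algebraMap {𝕜 n : Type*} [RCLike 𝕜] [Fintype n] {A : Matrix n n ℝ}
    (hA : A.PosDef) : (A.map (algebraMap ℝ 𝕜)).PosDef := by
  have hherm : (A.map (algebraMap ℝ 𝕜)).IsHermitian := hA.1.map _ fun x => by simp
  refine PosDef.of_dotProduct_mulVec_pos hherm fun x hx =>
    RCLike.pos_iff.2 ⟨?_, hherm.im_star_dotProduct_mulVec_self x⟩
  set u : n → ℝ := fun i => RCLike.re (x i)
  set v : n → ℝ := fun i => RCLike.im (x i)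
  have hre : RCLike.re (star x ⬝ᵥ A.map (algebraMap ℝ 𝕜) *ᵥ x) = u ⬝ᵥ A *ᵥ u + v ⬝ᵥ A *ᵥ v := by
    simp [dotProduct, mulVec, Finset.mul_sum, ← Finset.sum_add_distrib, u, v]
  have huv : u ≠ 0 ∨ v ≠ 0 := by
    by_contra! h
    exact hx <| funext fun i =>
      RCLike.ext (by simpa using congrFun h.1 i) (by simpa using congrFun h.2 i)
  have hpos {w : n → ℝ} (hw : w ≠ 0) : 0 < w ⬝ᵥ A *ᵥ w := by
    simpa using hA.dotProduct_mulVec_pos hw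
  have hnonneg (w : n → ℝ) : 0 ≤ w ⬝ᵥ A *ᵥ w := by
    simpa using hA.posSemidef.dotProduct_mulVec_nonneg w
  rw [hre]
  rcases huv with hu | hv
  · exact add_pos_of_pos_of_nonneg (hpos hu) (hnonneg v)
  · exact add_pos_of_nonneg_of_pos (hnonneg u) (hpos hv)

namespace Matrix

variable {n : Type*} [Fintype n] [DecidableEq n]

theorem re_neg_of_det_quadratic_pencil_eq_zero {A B C : Matrix n n ℂ} (hA : A.PosDef)
    (hB : B.PosDef) (hC : C.PosDef) {z : ℂ} (hz : (z ^ 2 • A + z • B + C).det = 0) : z.re < 0 := by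
  obtain ⟨v, hv, hAv⟩ := exists_mulVec_eq_zero_iff.2 hz
  have hq := congrArg (star v ⬝ᵥ ·) hAv
  simp only [add_mulVec, smul_mulVec, dotProduct_add, dotProduct_smul, dotProduct_zero,
    smul_eq_mul] at hq
  exact Complex.re_neg_of_quadratic_eq_zero (hA.dotProduct_mulVec_pos hv)
    (hB.dotProduct_mulVec_pos hv) (hC.dotProduct_mulVec_pos hv) (by rw [← hq]; ring)

theorem re_neg_of_det_diagonal_pencil_eq_zero {l d k : n → ℝ} (hl : ∀ i, 0 < l i)
    (hd : ∀ i, 0 < d i) (hk : ∀ i, 0 < k i) {H : Matrix n n ℝ} (hH : H.PosDef) {z : ℂ}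
    (hz : (z ^ 2 • (1 : Matrix n n ℂ) + z • (diagonal l).map (algebraMap ℝ ℂ)
      + (diagonal d * H * diagonal k).map (algebraMap ℝ ℂ)).det = 0) :
    z.re < 0 := by
  set S : Matrix n n ℝ := diagonal (k / d)
  have hS : ∀ i, 0 < (k / d) i := fun i => div_pos (hk i) (hd i)
  have hsymm : S * (diagonal d * H * diagonal k) = (diagonal k)ᴴ * H * diagonal k := by
    have hkd : (fun i => (k / d) i * d i) = k := funext fun i => div_mul_cancel₀ _ (hd i).ne'
    rw [diagonal_conjTranspose, star_trivial, ← mul_assoc, ← mul_assoc, diagonal_mul_diagonal, hkd]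
  have hKHK : ((diagonal k)ᴴ * H * diagonal k).PosDef :=
    hH.conjTranspose_mul_mul_same (mulVec_injective_iff_isUnit.2 (PosDef.diagonal hk).isUnit)
  have hfactor : z ^ 2 • S.map (algebraMap ℝ ℂ)
      + z • (diagonal fun i => (k / d) i * l i).map (algebraMap ℝ ℂ)
      + ((diagonal k)ᴴ * H * diagonal k).map (algebraMap ℝ ℂ) = S.map (algebraMap ℝ ℂ) *
      (z ^ 2 • (1 : Matrix n n ℂ) + z • (diagonal l).map (algebraMap ℝ ℂ)
        + (diagonal d * H * diagonal k).map (algebraMap ℝ ℂ)) := by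
    rw [mul_add, mul_add, Matrix.mul_smul, Matrix.mul_smul, mul_one, ← Matrix.map_mul,
      ← Matrix.map_mul, diagonal_mul_diagonal, hsymm]
  refine re_neg_of_det_quadratic_pencil_eq_zero (PosDef.diagonal hS).map_algebraMap
    (PosDef.diagonal fun i => mul_pos (hS i) (hl i)).map_algebraMap hKHK.map_algebraMap ?_
  rw [hfactor, det_mul, hz, mul_zero]

end Matrix

theorem quadratic_matrix_pencil_roots_neg_re
    (l₁ l₂ d₁ d₂ k₁ k₂ : ℝ)
    (hl₁ : 0 < l₁) (hl₂ : 0 < l₂) (hd₁ : 0 < d₁) (hd₂ : 0 < d₂)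
    (hk₁ : 0 < k₁) (hk₂ : 0 < k₂)
    (H : Matrix (Fin 2) (Fin 2) ℝ) (hH : H.PosDef)
    (L : Matrix (Fin 2) (Fin 2) ℝ) (hL : L = Matrix.diagonal ![l₁, l₂])
    (D : Matrix (Fin 2) (Fin 2) ℝ) (hD : D = Matrix.diagonal ![d₁, d₂])
    (K : Matrix (Fin 2) (Fin 2) ℝ) (hK : K = Matrix.diagonal ![k₁, k₂])
    (P : Matrix (Fin 2) (Fin 2) ℝ) (hP : P = D * H * K)
    (z : ℂ)
    (hz : (z ^ 2 • (1 : Matrix (Fin 2) (Fin 2) ℂ)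
        + z • L.map (algebraMap ℝ ℂ) + P.map (algebraMap ℝ ℂ)).det = 0) :
    z.re < 0 := by
  subst hL hD hK hP
  exact re_neg_of_det_diagonal_pencil_eq_zero (Fin.forall_fin_two.2 ⟨hl₁, hl₂⟩)
    (Fin.forall_fin_two.2 ⟨hd₁, hd₂⟩) (Fin.forall_fin_two.2 ⟨hk₁, hk₂⟩) hH hz
end

section
/- Let ε > 0, let K = diag(k₁, k₂), L = diag(l₁, l₂), D = diag(d₁, d₂) be 2×2 real diagonal matrices with all of k₁, k₂, l₁, l₂, d₁, d₂ > 0, and let H be a 2×2 real symmetric positive definite matrix. Then the 4×4 real block matrix A = [[0, −(1/√ε)·K],[D·H, −L]] is Hurwitz. -/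
/-- A square real matrix is Hurwitz if every root of its characteristic polynomial over `ℂ`
(i.e., every eigenvalue) has strictly negative real part. -/
def IsHurwitz {ι : Type} [Fintype ι] [DecidableEq ι] (M : Matrix ι ι ℝ) : Prop :=
  ∀ z ∈ (M.map (algebraMap ℝ ℂ)).charpoly.roots, z.re < 0

/-!
A Lyapunov argument. Put `c = 1/√ε`, `W = c K D⁻¹` and `Q = diag(H, W)`. Since `W (D H) = (c K)ᵀ H`,
the cross terms of `AᵀQ + QA` cancel and it equals `diag(0, -(W L + L W))`. For an eigenvector
`(x, y)` of `A` with eigenvalue `λ` this gives `2 Re λ · (x*Hx + y*Wy) = -y*(W L + L W)y`, which is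
negative unless `y = 0`; and `y = 0` forces `D H x = 0`, hence `x = 0`.
-/

open Matrix

theorem isHurwitz_of_forall_eigenvector {ι : Type} [Fintype ι] [DecidableEq ι]
    {M : Matrix ι ι ℝ}
    (h : ∀ (z : ℂ) (v : ι → ℂ), v ≠ 0 → M.map (algebraMap ℝ ℂ) *ᵥ v = z • v → z.re < 0) :
    IsHurwitz M := by
  intro z hz
  have hroot := (Polynomial.mem_roots (charpoly_monic _).ne_zero).1 hz
  rw [← mem_spectrum_iff_isRoot_charpoly, ← spectrum_toLin',
    ← Module.End.hasEigenvalue_iff_mem_spectrum] at hroot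
  obtain ⟨v, hv⟩ := hroot.exists_hasEigenvector
  exact h z v hv.2 (Module.End.mem_eigenspace_iff.1 hv.1)

namespace Matrix

variable {n : Type*} [Fintype n]

theorem re_star_dotProduct_map_mulVec (P : Matrix n n ℝ) (v : n → ℂ) :
    (star v ⬝ᵥ (P.map (algebraMap ℝ ℂ) *ᵥ v)).re =
      (fun i ↦ (v i).re) ⬝ᵥ (P *ᵥ fun i ↦ (v i).re) +
        (fun i ↦ (v i).im) ⬝ᵥ (P *ᵥ fun i ↦ (v i).im) := by
  simp only [dotProduct, mulVec, Complex.re_sum, Finset.mul_sum, ← Finset.sum_add_distrib]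
  refine Finset.sum_congr rfl fun i _ ↦ Finset.sum_congr rfl fun j _ ↦ ?_
  simp

theorem PosDef.re_star_dotProduct_map_mulVec_pos {P : Matrix n n ℝ} (hP : P.PosDef)
    {v : n → ℂ} (hv : v ≠ 0) : 0 < (star v ⬝ᵥ (P.map (algebraMap ℝ ℂ) *ᵥ v)).re := by
  rw [re_star_dotProduct_map_mulVec]
  have hform (w : n → ℝ) : w ⬝ᵥ (P *ᵥ w) = star w ⬝ᵥ (P *ᵥ w) := by rw [star_trivial]
  have hre_or_im : (fun i ↦ (v i).re) ≠ 0 ∨ (fun i ↦ (v i).im) ≠ 0 := by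
    by_contra! h
    exact hv (funext fun i ↦ Complex.ext (congrFun h.1 i) (congrFun h.2 i))
  rw [hform, hform]
  rcases hre_or_im with hre | him
  · exact add_pos_of_pos_of_nonneg (hP.dotProduct_mulVec_pos hre)
      (hP.posSemidef.dotProduct_mulVec_nonneg _)
  · exact add_pos_of_nonneg_of_pos (hP.posSemidef.dotProduct_mulVec_nonneg _)
      (hP.dotProduct_mulVec_pos him)

theorem PosDef.fromBlocks_zero_zero {m R : Type*} [Fintype m] [Ring R] [PartialOrder R]
    [StarRing R] [IsOrderedAddMonoid R] {P : Matrix m m R} {W : Matrix n n R}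
    (hP : P.PosDef) (hW : W.PosDef) : (fromBlocks P 0 0 W).PosDef := by
  refine of_dotProduct_mulVec_pos (hP.isHermitian.fromBlocks (by simp) hW.isHermitian)
    fun x hx ↦ ?_
  rw [fromBlocks_mulVec, dotProduct_block]
  simp only [zero_mulVec, add_zero, zero_add, Sum.elim_comp_inl, Sum.elim_comp_inr]
  by_cases hx₁ : x ∘ Sum.inl = 0
  · have hx₂ : x ∘ Sum.inr ≠ 0 := fun hx₂ ↦
      hx (by rw [← Sum.elim_comp_inl_inr x, hx₁, hx₂]; simp)
    exact add_pos_of_nonneg_of_pos (hP.posSemidef.dotProduct_mulVec_nonneg _)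
      (hW.dotProduct_mulVec_pos hx₂)
  · exact add_pos_of_pos_of_nonneg (hP.dotProduct_mulVec_pos hx₁)
      (hW.posSemidef.dotProduct_mulVec_nonneg _)

/-- The Lyapunov operator: `xᴴ (lyapunovMap A Q) x` is the derivative of `xᴴ Q x` along `ẋ = A x`. -/
def lyapunovMap {R : Type*} [Mul R] [AddCommMonoid R] [Star R] (A Q : Matrix n n R) :
    Matrix n n R :=
  Aᴴ * Q + Q * A

theorem lyapunovMap_map {R S : Type*} [CommRing R] [StarRing R] [CommRing S] [StarRing S]
    (f : R →+* S) (hf : Function.Semiconj f star star) (A Q : Matrix n n R) :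
    (lyapunovMap A Q).map f = lyapunovMap (A.map f) (Q.map f) := by
  rw [lyapunovMap, lyapunovMap, Matrix.map_add _ (map_add f), Matrix.map_mul, Matrix.map_mul,
    conjTranspose_map _ hf]

theorem star_dotProduct_lyapunovMap_mulVec {R : Type*} [CommRing R] [StarRing R]
    {A : Matrix n n R} (Q : Matrix n n R) {z : R} {v : n → R} (hv : A *ᵥ v = z • v) :
    star v ⬝ᵥ (lyapunovMap A Q *ᵥ v) = (star z + z) * (star v ⬝ᵥ (Q *ᵥ v)) := by
  rw [lyapunovMap, add_mulVec, ← mulVec_mulVec, ← mulVec_mulVec, dotProduct_add,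
    dotProduct_mulVec, vecMul_conjTranspose, star_star, hv, mulVec_smul, star_smul,
    smul_dotProduct, dotProduct_smul, smul_eq_mul, smul_eq_mul, add_mul]

theorem lyapunovMap_fromBlocks {m R : Type*} [Fintype m] [CommRing R] [StarRing R]
    (B : Matrix m n R) (C : Matrix n m R) (L : Matrix n n R) {P : Matrix m m R}
    {W : Matrix n n R} (hP : P.IsHermitian) (hW : W.IsHermitian) (hWC : W * C = Bᴴ * P) :
    lyapunovMap (fromBlocks 0 (-B) C (-L)) (fromBlocks P 0 0 W) =
      fromBlocks 0 0 0 (-lyapunovMap L W) := by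
  have hCW : Cᴴ * W = P * B := by
    simpa [conjTranspose_mul, hP.eq, hW.eq] using congrArg conjTranspose hWC
  simp [lyapunovMap, fromBlocks_conjTranspose, fromBlocks_multiply, fromBlocks_add, hCW, hWC,
    add_comm]

end Matrix

theorem isHurwitz_of_lyapunovMap {ι : Type} [Fintype ι] [DecidableEq ι] (A : Matrix ι ι ℝ)
    {Q : Matrix ι ι ℝ} (hQ : Q.PosDef)
    (hdecay : ∀ (z : ℂ) (v : ι → ℂ), v ≠ 0 → A.map (algebraMap ℝ ℂ) *ᵥ v = z • v →
      (star v ⬝ᵥ ((lyapunovMap A Q).map (algebraMap ℝ ℂ) *ᵥ v)).re < 0) :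
    IsHurwitz A := by
  refine isHurwitz_of_forall_eigenvector fun z v hv hAv ↦ ?_
  have hform := hQ.re_star_dotProduct_map_mulVec_pos hv
  have hderiv := hdecay z v hv hAv
  rw [lyapunovMap_map _ (fun _ ↦ by simp), star_dotProduct_lyapunovMap_mulVec _ hAv,
    Complex.star_def, add_comm, Complex.add_conj, Complex.re_ofReal_mul] at hderiv
  nlinarith

theorem isHurwitz_fromBlocks {ι : Type} [Fintype ι] [DecidableEq ι] (B C L : Matrix ι ι ℝ)
    {P W : Matrix ι ι ℝ} (hP : P.PosDef) (hW : W.PosDef) (hWC : W * C = Bᵀ * P)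
    (hWL : (lyapunovMap L W).PosDef) (hC : C.det ≠ 0) :
    IsHurwitz (fromBlocks 0 (-B) C (-L)) := by
  refine isHurwitz_of_lyapunovMap _ (hP.fromBlocks_zero_zero hW) fun z v hv hAv ↦ ?_
  rw [lyapunovMap_fromBlocks B C L hP.isHermitian hW.isHermitian
    (by rwa [conjTranspose_eq_transpose_of_trivial])]
  have hy : v ∘ Sum.inr ≠ 0 := by
    intro hy
    have hCx : C.map (algebraMap ℝ ℂ) *ᵥ (v ∘ Sum.inl) = 0 := by
      simpa [fromBlocks_map, fromBlocks_mulVec, Pi.smul_comp, hy] using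
        congrArg (· ∘ Sum.inr) hAv
    have hCdet : (C.map (algebraMap ℝ ℂ)).det ≠ 0 := by
      rw [← RingHom.mapMatrix_apply, ← RingHom.map_det]
      simpa using hC
    have hx := eq_zero_of_mulVec_eq_zero hCdet hCx
    exact hv (by rw [← Sum.elim_comp_inl_inr v, hx, hy]; simp)
  simp only [fromBlocks_map, Matrix.map_zero _ (map_zero _), fromBlocks_mulVec, zero_mulVec,
    add_zero, dotProduct_block, Sum.elim_comp_inl, Sum.elim_comp_inr, dotProduct_zero, zero_add]
  rw [Matrix.map_neg _ (map_neg _), neg_mulVec, dotProduct_neg, Complex.neg_re]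
  exact neg_lt_zero.2 (hWL.re_star_dotProduct_map_mulVec_pos hy)

theorem isHurwitz_fromBlocks_diagonal {ι : Type} [Fintype ι] [DecidableEq ι] {k l d : ι → ℝ}
    (hk : ∀ i, 0 < k i) (hl : ∀ i, 0 < l i) (hd : ∀ i, 0 < d i) {H : Matrix ι ι ℝ}
    (hH : H.PosDef) :
    IsHurwitz (fromBlocks 0 (-diagonal k) (diagonal d * H) (-diagonal l)) := by
  refine isHurwitz_fromBlocks (W := diagonal (k / d)) _ _ _ hH
    (posDef_diagonal_iff.2 fun i ↦ div_pos (hk i) (hd i)) ?_ ?_ ?_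
  · rw [← mul_assoc, diagonal_mul_diagonal, diagonal_transpose]
    congr
    funext i
    simp [(hd i).ne']
  · rw [lyapunovMap, diagonal_conjTranspose, diagonal_mul_diagonal, diagonal_mul_diagonal,
      diagonal_add, posDef_diagonal_iff]
    intro i
    have := hk i; have := hl i; have := hd i
    simp only [Pi.div_apply, Pi.star_apply, star_trivial]
    positivity
  · rw [det_mul, det_diagonal]
    exact mul_ne_zero (Finset.prod_ne_zero_iff.2 fun i _ ↦ (hd i).ne') hH.det_pos.ne'

theorem block_matrix_hurwitz
    (ε k₁ k₂ l₁ l₂ d₁ d₂ : ℝ)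
    (hε : 0 < ε) (hk₁ : 0 < k₁) (hk₂ : 0 < k₂) (hl₁ : 0 < l₁) (hl₂ : 0 < l₂)
    (hd₁ : 0 < d₁) (hd₂ : 0 < d₂)
    (H : Matrix (Fin 2) (Fin 2) ℝ) (hH : H.PosDef)
    (K : Matrix (Fin 2) (Fin 2) ℝ) (hK : K = Matrix.diagonal ![k₁, k₂])
    (L : Matrix (Fin 2) (Fin 2) ℝ) (hL : L = Matrix.diagonal ![l₁, l₂])
    (D : Matrix (Fin 2) (Fin 2) ℝ) (hD : D = Matrix.diagonal ![d₁, d₂]) :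
    IsHurwitz (Matrix.fromBlocks 0 (-((1 / Real.sqrt ε) • K)) (D * H) (-L)) := by
  subst hK hL hD
  rw [← diagonal_smul]
  exact isHurwitz_fromBlocks_diagonal (by simp [Fin.forall_fin_two, *])
    (by simp [Fin.forall_fin_two, *]) (by simp [Fin.forall_fin_two, *]) hH
end

section
/- Let l₁, l₂, p₁₁, p₂₂ be strictly positive real numbers and let Δ be a real number with Δ ≤ p₁₁·p₂₂. Define b₃ = l₁ + l₂, b₂ = l₁·l₂ + p₁₁ + p₂₂, b₁ = l₁·p₂₂ + l₂·p₁₁, and b₀ = Δ. Then (b₃·b₂ − b₁)·b₁ − b₃²·b₀ > 0 (and in particular b₃·b₂ − b₁ > 0). -/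
theorem routh_hurwitz_key_inequality
    (l₁ l₂ p₁₁ p₂₂ Δ : ℝ)
    (hl₁ : 0 < l₁) (hl₂ : 0 < l₂) (hp₁₁ : 0 < p₁₁) (hp₂₂ : 0 < p₂₂)
    (hΔ : Δ ≤ p₁₁ * p₂₂)
    (b₃ b₂ b₁ b₀ : ℝ)
    (hb₃ : b₃ = l₁ + l₂) (hb₂ : b₂ = l₁ * l₂ + p₁₁ + p₂₂)
    (hb₁ : b₁ = l₁ * p₂₂ + l₂ * p₁₁) (hb₀ : b₀ = Δ) :
    0 < (b₃ * b₂ - b₁) * b₁ - b₃ ^ 2 * b₀ ∧ 0 < b₃ * b₂ - b₁ := by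
  subst hb₃ hb₂ hb₁ hb₀
  have key : 0 < l₁ * l₂ *
      (l₁ ^ 2 * p₂₂ + l₂ ^ 2 * p₁₁ + l₁ * l₂ * (p₁₁ + p₂₂) + (p₁₁ - p₂₂) ^ 2) := by
    have h1 : 0 < l₁ ^ 2 * p₂₂ + l₂ ^ 2 * p₁₁ + l₁ * l₂ * (p₁₁ + p₂₂) + (p₁₁ - p₂₂) ^ 2 := by
      positivity
    exact mul_pos (mul_pos hl₁ hl₂) h1
  have hrest : 0 ≤ (l₁ + l₂) ^ 2 * (p₁₁ * p₂₂ - b₀) :=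
    mul_nonneg (sq_nonneg _) (by linarith)
  constructor
  · nlinarith [key, hrest]
  · nlinarith [mul_pos hl₁ hl₂, mul_pos hl₁ hp₁₁, mul_pos hl₂ hp₂₂]
end

section
/- Under the stated hypotheses, the derivative of r at 0 vanishes: Dr(0) = 0. (Equivalently, in the Taylor expansion of the equilibrium r(a) of the averaged system in the amplitudes a = (a₁, a₂), all first-order coefficients are zero.) -/
open intervalIntegral Real

/-!
Along a ray `a = t • h` the equilibrium satisfies `r (t • h) = t • Dr(0) h + o(t)`. Expanding `v`
to second order at its critical point `0`, uniformly in `σ`, and dividing the averaged equations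
by `t²` gives `∫ H (Dr(0) h + p_h σ) (Dr(0) h + p_h σ) * sin (ω_k σ) dσ = 0`. The reflection
`σ ↦ T - σ` changes the sign of `p_h` and of the sines, so only the cross terms survive, and the
orthogonality of the sines leaves `h_k * (H + Hᵀ) (Dr(0) h) e_k = 0` for `k = 1, 2` and all `h`.
Hence `(H + Hᵀ) (Dr(0) h)` vanishes, so `H (Dr(0) h) (Dr(0) h) = 0` and `Dr(0) h = 0`.
-/

open Filter Asymptotics Topology Set

variable {E : Type*} [NormedAddCommGroup E] [NormedSpace ℝ E]

theorem ContDiff.isLittleO_taylor_two {v : E → ℝ} (hv : ContDiff ℝ 2 v) :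
    (fun x => v x - v 0 - fderiv ℝ v 0 x - (1 / 2) * fderiv ℝ (fderiv ℝ v) 0 x x)
      =o[𝓝 0] fun x => ‖x‖ ^ 2 := by
  set H := fderiv ℝ (fderiv ℝ v) 0
  have hsymm : ∀ x y, H x y = H y x := fun x y =>
    (hv.contDiffAt.isSymmSndFDerivAt (by simp)).eq x y
  have hH : HasFDerivAt (fderiv ℝ v) H 0 :=
    ((hv.fderiv_right le_rfl).differentiable one_ne_zero 0).hasFDerivAt
  have hderiv : ∀ y, HasFDerivAt (fun x => v x - fderiv ℝ v 0 x - (1 / 2) * H x x)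
      (fderiv ℝ v y - fderiv ℝ v 0 - H y) y := by
    intro y
    have hq := ((H.hasFDerivAt (x := y)).clm_apply (hasFDerivAt_id y)).const_mul (1 / 2 : ℝ)
    refine (((hv.differentiable (by simp) y).hasFDerivAt.sub
      (fderiv ℝ v 0).hasFDerivAt).sub hq).congr_fderiv ?_
    congr 1
    refine ContinuousLinearMap.ext fun z => ?_
    simp only [ContinuousLinearMap.comp_id, id_eq, smul_add, add_apply, smul_apply, smul_eq_mul,
      ContinuousLinearMap.flip_apply, hsymm z y]
    ring
  have hsmall : (fun y => fderiv ℝ v y - fderiv ℝ v 0 - H y) =o[𝓝 0] fun y => ‖y - 0‖ ^ 1 := by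
    simpa using (hasFDerivAt_iff_isLittleO_nhds_zero.1 hH).norm_right
  have hpow := convex_univ.isLittleO_pow_succ (mem_univ 0) (n := 1)
    (fun y _ => (hderiv y).hasFDerivWithinAt) (by rw [nhdsWithin_univ]; exact hsmall)
  rw [nhdsWithin_univ] at hpow
  refine hpow.congr (fun x => ?_) (fun x => by simp)
  simp only [map_zero]
  ring

theorem Asymptotics.IsLittleO.intervalIntegral {α : Type*} {l : Filter α} {F : α × ℝ → E}
    {g : α → ℝ} {a b : ℝ} (h : F =o[l ×ˢ 𝓟 (uIcc a b)] fun q => g q.1) :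
    (fun t => ∫ σ in a..b, F (t, σ)) =o[l] g := by
  rw [isLittleO_iff] at h ⊢
  intro c hc
  have hδ := eventually_prod_principal_iff.1 (h (c := c / (|b - a| + 1)) (by positivity))
  filter_upwards [hδ] with t ht
  calc ‖∫ σ in a..b, F (t, σ)‖ ≤ c / (|b - a| + 1) * ‖g t‖ * |b - a| :=
        norm_integral_le_of_norm_le_const fun σ hσ => ht σ (uIoc_subset_uIcc hσ)
    _ ≤ c * ‖g t‖ := by
        rw [div_mul_eq_mul_div, div_mul_eq_mul_div, div_le_iff₀ (by positivity)]
        nlinarith [abs_nonneg (b - a), mul_nonneg hc.le (norm_nonneg (g t))]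

theorem isLittleO_sq_expansion_along_ray {S : Type*} [TopologicalSpace S]
    {v : E → ℝ} {H : E →L[ℝ] E →L[ℝ] ℝ}
    (hvH : (fun x => v x - v 0 - (1 / 2) * H x x) =o[𝓝 0] fun x => ‖x‖ ^ 2)
    {ρ : ℝ → E} {b : E} (hρ : HasDerivAt ρ b 0) (hρ0 : ρ 0 = 0)
    {p : S → E} {s : Set S} (hs : IsCompact s) (hp : ContinuousOn p s) :
    (fun q : ℝ × S => v (ρ q.1 + q.1 • p q.2) - v 0 - q.1 ^ 2 / 2 * H (b + p q.2) (b + p q.2))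
      =o[𝓝 0 ×ˢ 𝓟 s] fun q => q.1 ^ 2 := by
  -- estimates along `𝓝 0 ×ˢ 𝓟 s` hold as `t → 0` uniformly in `σ ∈ s`
  set l := 𝓝 (0 : ℝ) ×ˢ 𝓟 s
  set X : ℝ × S → E := fun q => ρ q.1 + q.1 • p q.2
  set Y : ℝ × S → E := fun q => ρ q.1 - q.1 • b
  set Z : ℝ × S → E := fun q => q.1 • (b + p q.2)
  have hXYZ : ∀ q, X q = Y q + Z q := fun q => by simp only [X, Y, Z, smul_add]; abel
  have hY : Y =o[l] fun q => q.1 := by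
    have hρ' := hasDerivAt_iff_isLittleO_nhds_zero.1 hρ
    simp only [zero_add, hρ0, sub_zero] at hρ'
    exact hρ'.comp_tendsto tendsto_fst
  have hZ : Z =O[l] fun q => q.1 := by
    have hbp : (fun q : ℝ × S => b + p q.2) =O[l] fun _ => (1 : ℝ) :=
      ((continuousOn_const.add hp).isBigO_principal hs (by simp)).comp_tendsto tendsto_snd
    simpa only [smul_eq_mul, mul_one] using (isBigO_refl (fun q : ℝ × S => q.1) l).smul hbp
  have hX : X =O[l] fun q => q.1 := (hY.isBigO.add hZ).congr_left fun q => (hXYZ q).symm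
  have hTaylor : (fun q => v (X q) - v 0 - (1 / 2) * H (X q) (X q)) =o[l] fun q => q.1 ^ 2 :=
    (hvH.comp_tendsto (hX.trans_tendsto tendsto_fst)).trans_isBigO (hX.norm_left.pow 2)
  have hbilin : (fun q => H (X q) (X q) - H (Z q) (Z q)) =o[l] fun q => q.1 ^ 2 := by
    have hO : ∀ f g : ℝ × S → E, (fun q => H (f q) (g q)) =O[l] fun q => ‖f q‖ * ‖g q‖ :=
      fun f g => H.isBoundedBilinearMap.isBigO_comp
    have h1 := (hO Y X).trans_isLittleO (hY.norm_norm.mul_isBigO hX.norm_norm)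
    have h2 := (hO Z Y).trans_isLittleO (hZ.norm_norm.mul_isLittleO hY.norm_norm)
    refine (h1.add h2).congr (fun q => ?_) (fun q => by simp [sq])
    simp only [hXYZ, map_add, add_apply]
    ring
  refine (hTaylor.add (hbilin.const_mul_left (1 / 2))).congr (fun q => ?_) (fun _ => rfl)
  simp only [Z, map_smul, smul_apply, smul_eq_mul]
  ring

theorem eq_zero_of_isLittleO_const_mul_sq {c : ℝ}
    (h : (fun t : ℝ => c * t ^ 2) =o[𝓝 0] fun t => t ^ 2) : c = 0 := by
  by_contra hc
  refine isLittleO_irrefl ?_ ((isLittleO_const_mul_left_iff hc).1 h)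
  have hne : ∀ᶠ t in 𝓝[≠] (0 : ℝ), t ^ 2 ≠ 0 :=
    eventually_nhdsWithin_of_forall fun t ht => pow_ne_zero 2 ht
  exact hne.frequently.filter_mono nhdsWithin_le_nhds

theorem integral_bilin_mul_eq_zero_of_eventually
    {v : E → ℝ} {H : E →L[ℝ] E →L[ℝ] ℝ} (hv : Continuous v)
    (hvH : (fun x => v x - v 0 - (1 / 2) * H x x) =o[𝓝 0] fun x => ‖x‖ ^ 2)
    {ρ : ℝ → E} {b : E} (hρ : HasDerivAt ρ b 0) (hρ0 : ρ 0 = 0)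
    {p : ℝ → E} {w : ℝ → ℝ} (hp : Continuous p) (hw : Continuous w) {T : ℝ}
    (hw0 : ∫ σ in 0..T, w σ = 0)
    (heq : ∀ᶠ t in 𝓝 0, ∫ σ in 0..T, v (ρ t + t • p σ) * w σ = 0) :
    ∫ σ in 0..T, H (b + p σ) (b + p σ) * w σ = 0 := by
  set c := ∫ σ in 0..T, H (b + p σ) (b + p σ) * w σ
  have hw' : (fun q : ℝ × ℝ => w q.2) =O[𝓝 0 ×ˢ 𝓟 (uIcc 0 T)] fun _ => (1 : ℝ) :=
    (hw.continuousOn.isBigO_principal isCompact_uIcc (by simp)).comp_tendsto tendsto_snd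
  have hI := IsLittleO.intervalIntegral (g := fun t => t ^ 2)
    (((isLittleO_sq_expansion_along_ray hvH hρ hρ0 isCompact_uIcc hp.continuousOn).mul_isBigO
      hw').congr_right fun _ => mul_one _)
  -- near `t = 0` the integrated expansion equals `-(c / 2) * t ^ 2`, yet it is `o(t ^ 2)`
  suffices -c / 2 = 0 by linarith
  refine eq_zero_of_isLittleO_const_mul_sq (hI.congr' ?_ EventuallyEq.rfl)
  filter_upwards [heq] with t ht
  simp only [sub_mul, mul_assoc]
  rw [integral_sub, integral_sub, ht, integral_const_mul, integral_const_mul, hw0]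
  · ring
  all_goals exact Continuous.intervalIntegrable (by fun_prop) 0 T

theorem intervalIntegral.integral_eq_zero_of_comp_sub_left_eq_neg {f : ℝ → E} {T : ℝ}
    (hf : ∀ σ, f (T - σ) = -f σ) : ∫ σ in 0..T, f σ = 0 := by
  have h := integral_comp_sub_left f T (a := 0) (b := T)
  simp only [hf, integral_neg, sub_self, sub_zero] at h
  rw [neg_eq_iff_add_eq_zero, ← two_smul ℝ, smul_eq_zero] at h
  exact h.resolve_left two_ne_zero

theorem integral_bilin_self_mul_eq_of_reflection {H : E →L[ℝ] E →L[ℝ] ℝ} {b : E} {p : ℝ → E}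
    {w : ℝ → ℝ} {T : ℝ} (hp : Continuous p) (hw : Continuous w) (hpT : ∀ σ, p (T - σ) = -p σ)
    (hwT : ∀ σ, w (T - σ) = -w σ) :
    ∫ σ in 0..T, H (b + p σ) (b + p σ) * w σ = ∫ σ in 0..T, (H + H.flip) b (p σ) * w σ := by
  rw [← sub_eq_zero, ← integral_sub (Continuous.intervalIntegrable (by fun_prop) _ _)
    (Continuous.intervalIntegrable (by fun_prop) _ _)]
  refine integral_eq_zero_of_comp_sub_left_eq_neg fun σ => ?_
  simp only [hpT, hwT, map_add, map_neg, add_apply, neg_apply, ContinuousLinearMap.flip_apply]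
  ring

theorem sin_mul_sub_eq_neg {ω T : ℝ} {n : ℤ} (h : ω * T = 2 * π * n) (σ : ℝ) :
    sin (ω * (T - σ)) = -sin (ω * σ) := by
  rw [mul_sub, h, show 2 * π * n - ω * σ = -(ω * σ) + n * (2 * π) by ring,
    sin_periodic.int_mul n, sin_neg]

theorem integral_cos_mul_eq_zero {k T : ℝ} {n : ℤ} (hk : k ≠ 0) (h : k * T = 2 * π * n) :
    ∫ σ in 0..T, cos (k * σ) = 0 := by
  rw [integral_comp_mul_left (fun x => cos x) hk, integral_cos, mul_zero, h,
    show 2 * π * n = n * (2 * π) by ring, (sin_periodic.int_mul n).eq]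
  simp

theorem integral_sin_mul_sin {a b T : ℝ} {m n : ℤ} (ha : a * T = 2 * π * m)
    (hb : b * T = 2 * π * n) (hab : a + b ≠ 0) :
    ∫ σ in 0..T, sin (a * σ) * sin (b * σ) = if a = b then T / 2 else 0 := by
  have hprod : ∀ σ, sin (a * σ) * sin (b * σ) = (cos ((a - b) * σ) - cos ((a + b) * σ)) / 2 := by
    intro σ
    rw [sub_mul, add_mul, cos_sub, cos_add]
    ring
  have hsum : ∫ σ in 0..T, cos ((a + b) * σ) = 0 :=
    integral_cos_mul_eq_zero hab (n := m + n) (by push_cast; linarith)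
  simp only [hprod, integral_div]
  rw [integral_sub (Continuous.intervalIntegrable (by fun_prop) _ _)
    (Continuous.intervalIntegrable (by fun_prop) _ _), hsum]
  split_ifs with h
  · simp [h]
  · rw [integral_cos_mul_eq_zero (sub_ne_zero.2 h) (n := m - n) (by push_cast; linarith)]
    simp

theorem LinearMap.eq_zero_or_eq_zero_of_mul_eq_zero {R M : Type*} [Semiring R] [NoZeroDivisors R]
    [AddCommMonoid M] [Module R M] {f g : M →ₗ[R] R} (h : ∀ x, f x * g x = 0) :
    f = 0 ∨ g = 0 := by
  by_contra! hfg
  obtain ⟨x, hx⟩ := DFunLike.ne_iff.1 hfg.1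
  obtain ⟨y, hy⟩ := DFunLike.ne_iff.1 hfg.2
  have hgx : g x = 0 := (mul_eq_zero.1 (h x)).resolve_left hx
  have hfy : f y = 0 := (mul_eq_zero.1 (h y)).resolve_right hy
  exact mul_ne_zero (by simpa [hfy] using hx) (by simpa [hgx] using hy) (h (x + y))

theorem ContinuousLinearMap.apply_prod_mk_eq {M : Type*} [AddCommGroup M] [Module ℝ M]
    [TopologicalSpace M] (φ : ℝ × ℝ →L[ℝ] M) (x y : ℝ) :
    φ (x, y) = x • φ (1, 0) + y • φ (0, 1) := by
  rw [← map_smul, ← map_smul, ← map_add]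
  simp

theorem eq_zero_of_mul_flip_add_apply_eq_zero {H : ℝ × ℝ →L[ℝ] ℝ × ℝ →L[ℝ] ℝ}
    (hH : ∀ x, x ≠ 0 → 0 < H x x) {L : ℝ × ℝ →L[ℝ] ℝ × ℝ}
    (h₁ : ∀ h, h.1 * (H + H.flip) (L h) (1, 0) = 0)
    (h₂ : ∀ h, h.2 * (H + H.flip) (L h) (0, 1) = 0) : L = 0 := by
  set B := H + H.flip
  have hvanish : ∀ ℓ φ : ℝ × ℝ →ₗ[ℝ] ℝ, ℓ ≠ 0 → (∀ h, ℓ h * φ h = 0) → ∀ h, φ h = 0 :=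
    fun ℓ φ hℓ hℓφ h => by
      rw [(LinearMap.eq_zero_or_eq_zero_of_mul_eq_zero hℓφ).resolve_left hℓ, LinearMap.zero_apply]
  have hB₁ : ∀ h, B (L h) (1, 0) = 0 :=
    hvanish (LinearMap.fst ℝ ℝ ℝ) ((B.flip (1, 0)).comp L)
      (fun h => by simpa using LinearMap.congr_fun h (1, 0)) h₁
  have hB₂ : ∀ h, B (L h) (0, 1) = 0 :=
    hvanish (LinearMap.snd ℝ ℝ ℝ) ((B.flip (0, 1)).comp L)
      (fun h => by simpa using LinearMap.congr_fun h (0, 1)) h₂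
  refine ContinuousLinearMap.ext fun x => ?_
  by_contra hx
  have hB : B (L x) (L x) = 0 := by
    rw [← Prod.mk.eta (p := L x), (B (L x)).apply_prod_mk_eq, hB₁, hB₂]
    simp
  have := hH (L x) hx
  simp only [B, add_apply, ContinuousLinearMap.flip_apply] at hB
  linarith

noncomputable def sinPerturbation (ω₁ ω₂ : ℝ) (a : ℝ × ℝ) (σ : ℝ) : ℝ × ℝ :=
  (a.1 * sin (ω₁ * σ), a.2 * sin (ω₂ * σ))

section sinPerturbation

variable {ω₁ ω₂ : ℝ}

@[fun_prop]
theorem continuous_sinPerturbation (a : ℝ × ℝ) : Continuous (sinPerturbation ω₁ ω₂ a) := by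
  unfold sinPerturbation
  fun_prop

theorem sinPerturbation_smul (t : ℝ) (a : ℝ × ℝ) (σ : ℝ) :
    sinPerturbation ω₁ ω₂ (t • a) σ = t • sinPerturbation ω₁ ω₂ a σ := by
  simp only [sinPerturbation, Prod.smul_fst, Prod.smul_snd, smul_eq_mul, Prod.smul_mk, mul_assoc]

theorem sinPerturbation_sub {T : ℝ} {n₁ n₂ : ℤ} (h₁ : ω₁ * T = 2 * π * n₁)
    (h₂ : ω₂ * T = 2 * π * n₂) (a : ℝ × ℝ) (σ : ℝ) :
    sinPerturbation ω₁ ω₂ a (T - σ) = -sinPerturbation ω₁ ω₂ a σ := by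
  simp [sinPerturbation, sin_mul_sub_eq_neg h₁, sin_mul_sub_eq_neg h₂]

theorem integral_apply_sinPerturbation_mul_sin (φ : ℝ × ℝ →L[ℝ] ℝ) (a : ℝ × ℝ)
    {T ω : ℝ} {n₁ n₂ n : ℤ} (h₁ : ω₁ * T = 2 * π * n₁) (h₂ : ω₂ * T = 2 * π * n₂)
    (h : ω * T = 2 * π * n) (hω₁ω : ω₁ + ω ≠ 0) (hω₂ω : ω₂ + ω ≠ 0) :
    ∫ σ in 0..T, φ (sinPerturbation ω₁ ω₂ a σ) * sin (ω * σ) =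
      a.1 * φ (1, 0) * (if ω₁ = ω then T / 2 else 0) +
        a.2 * φ (0, 1) * (if ω₂ = ω then T / 2 else 0) := by
  have hexpand : ∀ σ, φ (sinPerturbation ω₁ ω₂ a σ) * sin (ω * σ)
      = a.1 * φ (1, 0) * (sin (ω₁ * σ) * sin (ω * σ))
        + a.2 * φ (0, 1) * (sin (ω₂ * σ) * sin (ω * σ)) := fun σ => by
    rw [sinPerturbation, φ.apply_prod_mk_eq, smul_eq_mul, smul_eq_mul]
    ring
  simp only [hexpand]
  rw [integral_add (Continuous.intervalIntegrable (by fun_prop) _ _)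
    (Continuous.intervalIntegrable (by fun_prop) _ _), integral_const_mul, integral_const_mul,
    integral_sin_mul_sin h₁ h hω₁ω, integral_sin_mul_sin h₂ h hω₂ω]

end sinPerturbation

theorem integral_flip_add_apply_sinPerturbation_mul_sin_eq_zero
    {v : ℝ × ℝ → ℝ} (hv : ContDiff ℝ 2 v) (hdv0 : fderiv ℝ v 0 = 0)
    {r : ℝ × ℝ → ℝ × ℝ} {L : ℝ × ℝ →L[ℝ] ℝ × ℝ} (hr : HasFDerivAt r L 0) (hr0 : r 0 = 0)
    {U : Set (ℝ × ℝ)} (hU : U ∈ 𝓝 0) {T ω₁ ω₂ ω : ℝ} {n₁ n₂ n : ℤ}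
    (hT₁ : ω₁ * T = 2 * π * n₁) (hT₂ : ω₂ * T = 2 * π * n₂) (hT : ω * T = 2 * π * n)
    (heq : ∀ a ∈ U, ∫ σ in 0..T, v (r a + sinPerturbation ω₁ ω₂ a σ) * sin (ω * σ) = 0)
    (h : ℝ × ℝ) :
    ∫ σ in 0..T, (fderiv ℝ (fderiv ℝ v) 0 + (fderiv ℝ (fderiv ℝ v) 0).flip) (L h)
      (sinPerturbation ω₁ ω₂ h σ) * sin (ω * σ) = 0 := by
  rw [← integral_bilin_self_mul_eq_of_reflection (continuous_sinPerturbation h) (by fun_prop)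
    (sinPerturbation_sub hT₁ hT₂ h) (sin_mul_sub_eq_neg hT)]
  have hρ : HasDerivAt (fun t : ℝ => r (t • h)) (L h) 0 := by
    have := hr.comp_hasDerivAt_of_eq (0 : ℝ) ((hasDerivAt_id 0).smul_const h) (by simp)
    rwa [one_smul] at this
  have hU' : ∀ᶠ t in 𝓝 (0 : ℝ), t • h ∈ U :=
    (continuous_id.smul continuous_const).tendsto' 0 0 (by simp) hU
  refine integral_bilin_mul_eq_zero_of_eventually hv.continuous
    (by simpa [hdv0] using hv.isLittleO_taylor_two) hρ (by simp [hr0])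
    (continuous_sinPerturbation h) (by fun_prop)
    (integral_eq_zero_of_comp_sub_left_eq_neg (sin_mul_sub_eq_neg hT)) ?_
  filter_upwards [hU'] with t ht
  simpa only [sinPerturbation_smul] using heq _ ht

theorem equilibrium_first_order_coeffs_vanish_general
    (v : ℝ × ℝ → ℝ) (hv : ContDiff ℝ 2 v)
    (hdv0 : fderiv ℝ v 0 = 0)
    (hHpos : ∀ x : ℝ × ℝ, x ≠ 0 → 0 < fderiv ℝ (fderiv ℝ v) 0 x x)
    (T ω₁ ω₂ : ℝ) (hT : 0 < T) (hω₁ : 0 < ω₁) (hω₂ : 0 < ω₂) (hne : ω₁ ≠ ω₂)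
    (n₁ n₂ : ℕ)
    (hT₁ : ω₁ * T = 2 * Real.pi * n₁) (hT₂ : ω₂ * T = 2 * Real.pi * n₂)
    (U : Set (ℝ × ℝ)) (hU : U ∈ nhds (0 : ℝ × ℝ))
    (r : ℝ × ℝ → ℝ × ℝ) (hr : ContDiffOn ℝ 2 r U) (hr0 : r 0 = 0)
    (heq₁ : ∀ a ∈ U,
      ∫ σ in (0 : ℝ)..T,
        v (r a + (a.1 * Real.sin (ω₁ * σ), a.2 * Real.sin (ω₂ * σ))) * Real.sin (ω₁ * σ) = 0)
    (heq₂ : ∀ a ∈ U,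
      ∫ σ in (0 : ℝ)..T,
        v (r a + (a.1 * Real.sin (ω₁ * σ), a.2 * Real.sin (ω₂ * σ))) * Real.sin (ω₂ * σ) = 0) :
    fderiv ℝ r 0 = 0 := by
  have hr' : HasFDerivAt r (fderiv ℝ r 0) 0 :=
    ((hr.contDiffAt hU).differentiableAt (by norm_num)).hasFDerivAt
  have hm₁ : ω₁ * T = 2 * π * (n₁ : ℤ) := by exact_mod_cast hT₁
  have hm₂ : ω₂ * T = 2 * π * (n₂ : ℤ) := by exact_mod_cast hT₂
  refine eq_zero_of_mul_flip_add_apply_eq_zero hHpos (fun h => ?_) (fun h => ?_)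
  · have h₁ := integral_flip_add_apply_sinPerturbation_mul_sin_eq_zero hv hdv0 hr' hr0 hU
      hm₁ hm₂ hm₁ heq₁ h
    rw [integral_apply_sinPerturbation_mul_sin _ _ hm₁ hm₂ hm₁ (by positivity)
      (by positivity)] at h₁
    simpa [hne.symm, hT.ne'] using h₁
  · have h₂ := integral_flip_add_apply_sinPerturbation_mul_sin_eq_zero hv hdv0 hr' hr0 hU
      hm₁ hm₂ hm₂ heq₂ h
    rw [integral_apply_sinPerturbation_mul_sin _ _ hm₁ hm₂ hm₂ (by positivity)
      (by positivity)] at h₂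
    simpa [hne, hT.ne'] using h₂

theorem equilibrium_first_order_coeffs_vanish
    (v : ℝ × ℝ → ℝ) (hv : ContDiff ℝ 2 v)
    (hdv0 : fderiv ℝ v 0 = 0)
    (hHpos : ∀ x : ℝ × ℝ, x ≠ 0 → 0 < fderiv ℝ (fderiv ℝ v) 0 x x)
    (T ω₁ ω₂ : ℝ) (hT : 0 < T) (hω₁ : 0 < ω₁) (hω₂ : 0 < ω₂) (hne : ω₁ ≠ ω₂)
    (n₁ n₂ : ℕ) (hn₁ : 0 < n₁) (hn₂ : 0 < n₂)
    (hT₁ : ω₁ * T = 2 * Real.pi * n₁) (hT₂ : ω₂ * T = 2 * Real.pi * n₂)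
    (U : Set (ℝ × ℝ)) (hU : U ∈ nhds (0 : ℝ × ℝ))
    (r : ℝ × ℝ → ℝ × ℝ) (hr : ContDiffOn ℝ 2 r U) (hr0 : r 0 = 0)
    (heq₁ : ∀ a ∈ U,
      ∫ σ in (0 : ℝ)..T,
        v (r a + (a.1 * Real.sin (ω₁ * σ), a.2 * Real.sin (ω₂ * σ))) * Real.sin (ω₁ * σ) = 0)
    (heq₂ : ∀ a ∈ U,
      ∫ σ in (0 : ℝ)..T,
        v (r a + (a.1 * Real.sin (ω₁ * σ), a.2 * Real.sin (ω₂ * σ))) * Real.sin (ω₂ * σ) = 0) :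
    fderiv ℝ r 0 = 0 :=
  equilibrium_first_order_coeffs_vanish_general v hv hdv0 hHpos T ω₁ ω₂ hT hω₁ hω₂ hne n₁ n₂ hT₁ hT₂
    U hU r hr hr0 heq₁ heq₂
end

section
/- Under the stated hypotheses, the demodulated averaged gradients satisfy the first-order expansions (1/Π)·∫₀^Π ∇v(r(a) + p_a(σ))·sin(ω₁σ) dσ = (a₁/2)·H·e₁ + o(‖a‖) and (1/Π)·∫₀^Π ∇v(r(a) + p_a(σ))·sin(ω₂σ) dσ = (a₂/2)·H·e₂ + o(‖a‖) as a → 0, where e₁ = (1,0) and e₂ = (0,1); that is, the difference between each left-hand side and the corresponding linear term, divided by ‖a‖, tends to 0 as a → 0. -/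
/-!
Write `∇v(x) = H x + ρ(x)` with `ρ(x) = o(‖x‖)`. Since `r(a) = O(‖a‖)`, the argument
`r(a) + p_a(σ)` of `∇v` is `O(‖a‖)` uniformly in `σ`, so the `ρ`-part contributes only
`o(‖a‖)` to the demodulated average. The linear part is computed exactly: on a common period
`[0, Π]` the orthogonality relations of `sin(ω₁σ)` and `sin(ω₂σ)` kill the constant `r(a)` and
the cross term and leave `(aᵢ/2) H eᵢ`.
-/

open Filter Topology

open Real Asymptotics

section Trigonometric

variable {T c d : ℝ} {m k : ℤ}

theorem integral_sin_mul_of_mul_eq (hc : c ≠ 0) (h : c * T = 2 * π * m) :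
    ∫ σ in (0 : ℝ)..T, sin (c * σ) = 0 := by
  rw [intervalIntegral.integral_comp_mul_left sin hc, integral_sin, mul_zero, h,
    mul_comm, cos_int_mul_two_pi, cos_zero, sub_self, smul_zero]

theorem integral_cos_mul_of_mul_eq (h : c * T = 2 * π * m) :
    ∫ σ in (0 : ℝ)..T, cos (c * σ) = if c = 0 then T else 0 := by
  split_ifs with hc
  · simp [hc]
  · rw [intervalIntegral.integral_comp_mul_left cos hc, integral_cos, mul_zero, h, sin_zero,
      show 2 * π * m = ((2 * m : ℤ) : ℝ) * π by push_cast; ring, sin_int_mul_pi, sub_zero,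
      smul_zero]

theorem integral_sin_mul_mul_sin_mul (hc : 0 < c) (hd : 0 < d) (hcT : c * T = 2 * π * m)
    (hdT : d * T = 2 * π * k) :
    ∫ σ in (0 : ℝ)..T, sin (c * σ) * sin (d * σ) = if c = d then T / 2 else 0 := by
  have hprod (σ : ℝ) : sin (c * σ) * sin (d * σ) = (cos ((c - d) * σ) - cos ((c + d) * σ)) / 2 := by
    rw [sub_mul, add_mul, ← two_mul_sin_mul_sin]; ring
  simp_rw [hprod]
  rw [intervalIntegral.integral_div, intervalIntegral.integral_sub
      ((by fun_prop : Continuous _).intervalIntegrable _ _)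
      ((by fun_prop : Continuous _).intervalIntegrable _ _),
    integral_cos_mul_of_mul_eq (m := m - k) (by rw [sub_mul, hcT, hdT]; push_cast; ring),
    integral_cos_mul_of_mul_eq (m := m + k) (by rw [add_mul, hcT, hdT]; push_cast; ring),
    if_neg (add_pos hc hd).ne']
  simp only [sub_eq_zero]
  split_ifs <;> ring

end Trigonometric

theorem intervalIntegral.integral_prodMk {E F : Type*} [NormedAddCommGroup E] [NormedSpace ℝ E]
    [CompleteSpace E] [NormedAddCommGroup F] [NormedSpace ℝ F] [CompleteSpace F]
    {f : ℝ → E} {g : ℝ → F} {a b : ℝ}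
    (hf : IntervalIntegrable f MeasureTheory.volume a b)
    (hg : IntervalIntegrable g MeasureTheory.volume a b) :
    ∫ x in a..b, (f x, g x) = (∫ x in a..b, f x, ∫ x in a..b, g x) := by
  have hfg : IntervalIntegrable (fun x => (f x, g x)) MeasureTheory.volume a b :=
    ⟨hf.1.prodMk hg.1, hf.2.prodMk hg.2⟩
  ext
  · exact ((ContinuousLinearMap.fst ℝ E F).intervalIntegral_comp_comm hfg).symm
  · exact ((ContinuousLinearMap.snd ℝ E F).intervalIntegral_comp_comm hfg).symm

noncomputable def perturbation (ω₁ ω₂ : ℝ) (a : ℝ × ℝ) (σ : ℝ) : ℝ × ℝ :=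
  (a.1 * sin (ω₁ * σ), a.2 * sin (ω₂ * σ))

theorem continuous_perturbation (ω₁ ω₂ : ℝ) (a : ℝ × ℝ) : Continuous (perturbation ω₁ ω₂ a) := by
  unfold perturbation; fun_prop

theorem norm_perturbation_le (ω₁ ω₂ : ℝ) (a : ℝ × ℝ) (σ : ℝ) : ‖perturbation ω₁ ω₂ a σ‖ ≤ ‖a‖ := by
  refine max_le ((norm_mul_le _ _).trans ?_) ((norm_mul_le _ _).trans ?_) <;>
  · refine (mul_le_of_le_one_right (norm_nonneg _) (abs_sin_le_one _)).trans ?_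
    first | exact norm_fst_le a | exact norm_snd_le a

theorem integral_sin_smul_add_perturbation {T ω ω₁ ω₂ : ℝ} {m m₁ m₂ : ℤ} (hω : 0 < ω) (hω₁ : 0 < ω₁)
    (hω₂ : 0 < ω₂) (hT : ω * T = 2 * π * m) (hT₁ : ω₁ * T = 2 * π * m₁)
    (hT₂ : ω₂ * T = 2 * π * m₂) (c a : ℝ × ℝ) :
    ∫ σ in (0 : ℝ)..T, sin (ω * σ) • (c + perturbation ω₁ ω₂ a σ) =
      (T / 2) • (if ω = ω₁ then a.1 else 0, if ω = ω₂ then a.2 else 0) := by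
  have hsplit (σ : ℝ) : sin (ω * σ) • (c + perturbation ω₁ ω₂ a σ) = sin (ω * σ) • c +
      (a.1 * (sin (ω * σ) * sin (ω₁ * σ)), a.2 * (sin (ω * σ) * sin (ω₂ * σ))) := by
    ext <;> simp only [perturbation, Prod.smul_fst, Prod.smul_snd, Prod.fst_add, Prod.snd_add,
      smul_eq_mul] <;> ring
  simp_rw [hsplit]
  rw [intervalIntegral.integral_add ((by fun_prop : Continuous _).intervalIntegrable _ _)
      ((by fun_prop : Continuous _).intervalIntegrable _ _),
    intervalIntegral.integral_smul_const, integral_sin_mul_of_mul_eq hω.ne' hT, zero_smul,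
    zero_add, intervalIntegral.integral_prodMk ((by fun_prop : Continuous _).intervalIntegrable _ _)
      ((by fun_prop : Continuous _).intervalIntegrable _ _),
    intervalIntegral.integral_const_mul, intervalIntegral.integral_const_mul,
    integral_sin_mul_mul_sin_mul hω hω₁ hT hT₁, integral_sin_mul_mul_sin_mul hω hω₂ hT hT₂]
  ext <;> simp only [Prod.smul_fst, Prod.smul_snd, smul_eq_mul] <;> split_ifs <;> ring

-- The filter `l ×ˢ 𝓟 s` makes the little-o hypothesis uniform in `t ∈ s`.
theorem isLittleO_intervalIntegral_of_prod_principal {α E F : Type*} [NormedAddCommGroup E]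
    [NormedSpace ℝ E] [NormedAddCommGroup F] {l : Filter α} {f : α × ℝ → E} {g : α → F} {a b : ℝ}
    (h : f =o[l ×ˢ 𝓟 (Set.uIoc a b)] (fun p => g p.1)) :
    (fun x => ∫ t in a..b, f (x, t)) =o[l] g := by
  refine IsLittleO.of_bound fun ε hε => ?_
  have hε' : 0 < ε / (|b - a| + 1) := by positivity
  filter_upwards [eventually_prod_principal_iff.mp (h.def hε')] with x hx
  calc ‖∫ t in a..b, f (x, t)‖ ≤ ε / (|b - a| + 1) * ‖g x‖ * |b - a| :=
        intervalIntegral.norm_integral_le_of_norm_le_const hx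
    _ ≤ ε * ‖g x‖ := by
        rw [mul_right_comm, div_mul_eq_mul_div, mul_div_assoc]
        refine mul_le_mul_of_nonneg_right (mul_le_of_le_one_right hε.le ?_) (norm_nonneg _)
        rw [div_le_one (by positivity)]
        linarith

theorem isLittleO_intervalIntegral_smul_sub_fderiv {α E F F' : Type*} [NormedAddCommGroup E]
    [NormedSpace ℝ E] [CompleteSpace E] [NormedAddCommGroup F] [NormedSpace ℝ F] [CompleteSpace F]
    [NormedAddCommGroup F']
    {G : E → F} {A : E →L[ℝ] F} (hGA : HasFDerivAt G A 0) (hG0 : G 0 = 0) (hGc : Continuous G)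
    {w : ℝ → ℝ} (hw : Continuous w) {q : α → ℝ → E} (hq : ∀ x, Continuous (q x))
    {l : Filter α} {g : α → F'} (hg : Tendsto g l (𝓝 0)) {a b : ℝ}
    (hqg : (fun p : α × ℝ => q p.1 p.2) =O[l ×ˢ 𝓟 (Set.uIoc a b)] (fun p => g p.1)) :
    (fun x => (∫ σ in a..b, w σ • G (q x σ)) - A (∫ σ in a..b, w σ • q x σ)) =o[l] g := by
  have hρ : (fun y => G y - A y) =o[𝓝 0] fun y => y := by simpa [hG0] using hGA.isLittleO
  have hq0 : Tendsto (fun p : α × ℝ => q p.1 p.2) (l ×ˢ 𝓟 (Set.uIoc a b)) (𝓝 0) :=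
    hqg.trans_tendsto (hg.comp tendsto_fst)
  obtain ⟨C, hC⟩ :=
    isCompact_uIcc.exists_bound_of_continuousOn (hw.continuousOn (s := Set.uIcc a b))
  have hwρ : (fun p : α × ℝ => w p.2 • (G (q p.1 p.2) - A (q p.1 p.2)))
      =O[l ×ˢ 𝓟 (Set.uIoc a b)] (fun p => G (q p.1 p.2) - A (q p.1 p.2)) :=
    IsBigO.of_bound C <| eventually_prod_principal_iff.mpr <| Eventually.of_forall
      fun _ σ hσ => by
        rw [norm_smul]
        exact mul_le_mul_of_nonneg_right (hC σ (Set.uIoc_subset_uIcc hσ)) (norm_nonneg _)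
  have hint := hwρ.trans_isLittleO ((hρ.comp_tendsto hq0).trans_isBigO hqg)
  refine (isLittleO_intervalIntegral_of_prod_principal hint).congr_left fun x => ?_
  have hwq : Continuous fun σ => w σ • q x σ := hw.smul (hq x)
  have hwGq : Continuous fun σ => w σ • G (q x σ) := hw.smul (hGc.comp (hq x))
  have hAwq : Continuous fun σ => A (w σ • q x σ) := A.continuous.comp hwq
  rw [← A.intervalIntegral_comp_comm (hwq.intervalIntegrable _ _),
    ← intervalIntegral.integral_sub (hwGq.intervalIntegrable a b) (hAwq.intervalIntegrable a b)]
  simp only [map_smul, smul_sub]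

theorem tendsto_norm_demodulated_average_sub_div_norm {F : Type*} [NormedAddCommGroup F]
    [NormedSpace ℝ F] [CompleteSpace F] {G : ℝ × ℝ → F} {A : ℝ × ℝ →L[ℝ] F}
    (hGA : HasFDerivAt G A 0) (hG0 : G 0 = 0) (hGc : Continuous G) {r : ℝ × ℝ → ℝ × ℝ}
    (hr : r =O[𝓝 0] fun a => a) {T ω ω₁ ω₂ : ℝ} {m m₁ m₂ : ℤ} (hT : 0 < T) (hω : 0 < ω)
    (hω₁ : 0 < ω₁) (hω₂ : 0 < ω₂) (hmT : ω * T = 2 * π * m) (hmT₁ : ω₁ * T = 2 * π * m₁)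
    (hmT₂ : ω₂ * T = 2 * π * m₂) :
    Tendsto (fun a : ℝ × ℝ =>
        ‖(1 / T) • (∫ σ in (0 : ℝ)..T, sin (ω * σ) • G (r a + perturbation ω₁ ω₂ a σ))
          - (1 / 2 : ℝ) • A (if ω = ω₁ then a.1 else 0, if ω = ω₂ then a.2 else 0)‖ / ‖a‖)
      (𝓝[≠] 0) (𝓝 0) := by
  have hq : (fun p : (ℝ × ℝ) × ℝ => r p.1 + perturbation ω₁ ω₂ p.1 p.2) =O[𝓝 0 ×ˢ 𝓟 (Set.uIoc 0 T)]
      (fun p => p.1) :=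
    (hr.comp_tendsto tendsto_fst).add (isBigO_of_le _ fun p => norm_perturbation_le ω₁ ω₂ p.1 p.2)
  have h := isLittleO_intervalIntegral_smul_sub_fderiv hGA hG0 hGc (w := fun σ => sin (ω * σ))
    (q := fun a σ => r a + perturbation ω₁ ω₂ a σ) (by fun_prop)
    (fun a => continuous_const.add (continuous_perturbation ω₁ ω₂ a)) tendsto_id hq
  refine ((h.const_smul_left (1 / T)).norm_norm.tendsto_div_nhds_zero.mono_left
    nhdsWithin_le_nhds).congr fun a => ?_
  rw [Pi.smul_apply, integral_sin_smul_add_perturbation hω hω₁ hω₂ hmT hmT₁ hmT₂, map_smul,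
    smul_sub, smul_smul, one_div_mul_eq_div, div_div_cancel_left' hT.ne', id, ← one_div]

theorem demodulated_averaged_gradient_first_order_expansion_general
    (v : ℝ × ℝ → ℝ) (hv : ContDiff ℝ 2 v)
    (hdv0 : fderiv ℝ v 0 = 0)
    (T ω₁ ω₂ : ℝ) (hT : 0 < T) (hω₁ : 0 < ω₁) (hω₂ : 0 < ω₂) (hne : ω₁ ≠ ω₂)
    (n₁ n₂ : ℕ)
    (hT₁ : ω₁ * T = 2 * Real.pi * n₁) (hT₂ : ω₂ * T = 2 * Real.pi * n₂)
    (U : Set (ℝ × ℝ)) (hU : U ∈ nhds (0 : ℝ × ℝ))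
    (r : ℝ × ℝ → ℝ × ℝ) (hr : ContDiffOn ℝ 1 r U) (hr0 : r 0 = 0)
    -- the gradient of `v`, as an `ℝ²`-valued map
    (gradv : ℝ × ℝ → ℝ × ℝ)
    (hgradv : ∀ x, gradv x = (fderiv ℝ v x (1, 0), fderiv ℝ v x (0, 1)))
    -- the columns `H·e₁` and `H·e₂` of the Hessian `H = ∇²v(0)`
    (He₁ He₂ : ℝ × ℝ)
    (hHe₁ : He₁ = (fderiv ℝ (fderiv ℝ v) 0 (1, 0) (1, 0),
                   fderiv ℝ (fderiv ℝ v) 0 (0, 1) (1, 0)))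
    (hHe₂ : He₂ = (fderiv ℝ (fderiv ℝ v) 0 (1, 0) (0, 1),
                   fderiv ℝ (fderiv ℝ v) 0 (0, 1) (0, 1))) :
    Tendsto
      (fun a : ℝ × ℝ =>
        ‖(1 / T) • (∫ σ in (0 : ℝ)..T,
            Real.sin (ω₁ * σ) •
              gradv (r a + (a.1 * Real.sin (ω₁ * σ), a.2 * Real.sin (ω₂ * σ))))
          - (a.1 / 2) • He₁‖ / ‖a‖)
      (𝓝[≠] (0 : ℝ × ℝ)) (𝓝 0)
    ∧
    Tendsto
      (fun a : ℝ × ℝ =>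
        ‖(1 / T) • (∫ σ in (0 : ℝ)..T,
            Real.sin (ω₂ * σ) •
              gradv (r a + (a.1 * Real.sin (ω₁ * σ), a.2 * Real.sin (ω₂ * σ))))
          - (a.2 / 2) • He₂‖ / ‖a‖)
      (𝓝[≠] (0 : ℝ × ℝ)) (𝓝 0) := by
  set B := fderiv ℝ (fderiv ℝ v) 0
  set A : ℝ × ℝ →L[ℝ] ℝ × ℝ := (B.flip (1, 0)).prod (B.flip (0, 1))
  have hsymm : IsSymmSndFDerivAt ℝ v 0 := hv.contDiffAt.isSymmSndFDerivAt (by simp)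
  have hB : HasFDerivAt (fderiv ℝ v) B 0 :=
    ((hv.fderiv_right (m := 1) le_rfl).differentiable one_ne_zero 0).hasFDerivAt
  have hGA : HasFDerivAt gradv A 0 := by
    rw [funext hgradv]
    simpa using (hB.clm_apply (hasFDerivAt_const _ _)).prodMk (hB.clm_apply (hasFDerivAt_const _ _))
  -- `A` reads the rows of the Hessian and `He₁`, `He₂` are its columns.
  have hA₁ (x : ℝ) : A (x, 0) = x • He₁ := by
    rw [show ((x, 0) : ℝ × ℝ) = x • (1, 0) by simp, map_smul, hHe₁, ← hsymm (1, 0) (0, 1)]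
    rfl
  have hA₂ (y : ℝ) : A (0, y) = y • He₂ := by
    rw [show ((0, y) : ℝ × ℝ) = y • (0, 1) by simp, map_smul, hHe₂, ← hsymm (0, 1) (1, 0)]
    rfl
  have hG0 : gradv 0 = 0 := by simp [hgradv, hdv0]
  have hGc : Continuous gradv := by
    have := hv.continuous_fderiv (by norm_num)
    rw [funext hgradv]
    fun_prop
  have hrO : r =O[𝓝 0] fun a => a := by
    simpa [hr0] using ((hr.contDiffAt hU).differentiableAt one_ne_zero).hasFDerivAt.isBigO_sub
  have hm₁ : ω₁ * T = 2 * π * ((n₁ : ℤ) : ℝ) := by exact_mod_cast hT₁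
  have hm₂ : ω₂ * T = 2 * π * ((n₂ : ℤ) : ℝ) := by exact_mod_cast hT₂
  constructor
  · simpa [perturbation, hne, hA₁, smul_smul, inv_mul_eq_div] using
      tendsto_norm_demodulated_average_sub_div_norm hGA hG0 hGc hrO hT hω₁ hω₁ hω₂ hm₁ hm₁ hm₂
  · simpa [perturbation, hne.symm, hA₂, smul_smul, inv_mul_eq_div] using
      tendsto_norm_demodulated_average_sub_div_norm hGA hG0 hGc hrO hT hω₂ hω₁ hω₂ hm₂ hm₁ hm₂

theorem demodulated_averaged_gradient_first_order_expansion
    (v : ℝ × ℝ → ℝ) (hv : ContDiff ℝ 2 v)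
    (hdv0 : fderiv ℝ v 0 = 0)
    (T ω₁ ω₂ : ℝ) (hT : 0 < T) (hω₁ : 0 < ω₁) (hω₂ : 0 < ω₂) (hne : ω₁ ≠ ω₂)
    (n₁ n₂ : ℕ) (hn₁ : 0 < n₁) (hn₂ : 0 < n₂)
    (hT₁ : ω₁ * T = 2 * Real.pi * n₁) (hT₂ : ω₂ * T = 2 * Real.pi * n₂)
    (U : Set (ℝ × ℝ)) (hU : U ∈ nhds (0 : ℝ × ℝ))
    (r : ℝ × ℝ → ℝ × ℝ) (hr : ContDiffOn ℝ 1 r U) (hr0 : r 0 = 0)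
    (hdr0 : fderiv ℝ r 0 = 0)
    -- the gradient of `v`, as an `ℝ²`-valued map
    (gradv : ℝ × ℝ → ℝ × ℝ)
    (hgradv : ∀ x, gradv x = (fderiv ℝ v x (1, 0), fderiv ℝ v x (0, 1)))
    -- the columns `H·e₁` and `H·e₂` of the Hessian `H = ∇²v(0)`
    (He₁ He₂ : ℝ × ℝ)
    (hHe₁ : He₁ = (fderiv ℝ (fderiv ℝ v) 0 (1, 0) (1, 0),
                   fderiv ℝ (fderiv ℝ v) 0 (0, 1) (1, 0)))
    (hHe₂ : He₂ = (fderiv ℝ (fderiv ℝ v) 0 (1, 0) (0, 1),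
                   fderiv ℝ (fderiv ℝ v) 0 (0, 1) (0, 1))) :
    Tendsto
      (fun a : ℝ × ℝ =>
        ‖(1 / T) • (∫ σ in (0 : ℝ)..T,
            Real.sin (ω₁ * σ) •
              gradv (r a + (a.1 * Real.sin (ω₁ * σ), a.2 * Real.sin (ω₂ * σ))))
          - (a.1 / 2) • He₁‖ / ‖a‖)
      (𝓝[≠] (0 : ℝ × ℝ)) (𝓝 0)
    ∧
    Tendsto
      (fun a : ℝ × ℝ =>
        ‖(1 / T) • (∫ σ in (0 : ℝ)..T,
            Real.sin (ω₂ * σ) •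
              gradv (r a + (a.1 * Real.sin (ω₁ * σ), a.2 * Real.sin (ω₂ * σ))))
          - (a.2 / 2) • He₂‖ / ‖a‖)
      (𝓝[≠] (0 : ℝ × ℝ)) (𝓝 0) :=
  demodulated_averaged_gradient_first_order_expansion_general v hv hdv0 T ω₁ ω₂ hT hω₁ hω₂ hne n₁ n₂
    hT₁ hT₂ U hU r hr hr0 gradv hgradv He₁ He₂ hHe₁ hHe₂
end

section
/- Let δ > 0, ε > 0, and let k'_v, k'_β, ω'_lv, ω'_lβ, ω'_hv, ω'_hβ, γ'_v, γ'_β, a_v, a_β all be strictly positive real numbers, let H be a 2×2 real symmetric positive definite matrix, and let B be an arbitrary 4×4 real matrix. Define the 4×4 matrix A = [[0, −(1/√ε)·diag(k'_v, k'_β)],[(1/2)·diag(ω'_lv·a_v, ω'_lβ·a_β)·H, −diag(ω'_lv, ω'_lβ)]] (2×2 blocks). Then the 8×8 matrix J = δ·[[A, 0],[B, −diag(ω'_hv, ω'_hβ, γ'_v, γ'_β)]] is Hurwitz. -/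
open Matrix ComplexOrder

theorem Complex.re_neg_of_quadratic_eq_zero_s10 {p q r z : ℂ} (hp : 0 < p) (hq : 0 < q) (hr : 0 < r)
    (h : p * z ^ 2 + q * z + r = 0) : z.re < 0 := by
  rw [Complex.pos_iff] at hp hq hr
  obtain ⟨hre, him⟩ := Complex.ext_iff.mp h
  simp only [Complex.add_re, Complex.add_im, Complex.mul_re, Complex.mul_im, pow_two,
    ← hp.2, ← hq.2, ← hr.2, Complex.zero_re, Complex.zero_im] at hre him
  by_contra! hz
  -- the imaginary part forces `z` real or `Re z = -q / 2p`
  have : z.im * (2 * p.re * z.re + q.re) = 0 := by linear_combination him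
  rcases mul_eq_zero.mp this with him0 | hcrit
  · rw [him0] at hre
    nlinarith [mul_nonneg hp.1.le (mul_nonneg hz hz), mul_nonneg hq.1.le hz]
  · nlinarith [mul_nonneg hp.1.le hz]

section

variable {n : Type} [Fintype n]

theorem re_neg_of_mulVec_quadratic_eq_zero {P Q R : Matrix n n ℂ} (hP : P.PosDef) (hQ : Q.PosDef)
    (hR : R.PosDef) {z : ℂ} {x : n → ℂ} (hx : x ≠ 0) (h : (z ^ 2 • P + z • Q + R) *ᵥ x = 0) :
    z.re < 0 := by
  refine Complex.re_neg_of_quadratic_eq_zero_s10 (hP.dotProduct_mulVec_pos hx)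
    (hQ.dotProduct_mulVec_pos hx) (hR.dotProduct_mulVec_pos hx) ?_
  simpa [add_mulVec, smul_mulVec, dotProduct_add, dotProduct_smul, mul_comm] using
    congrArg (star x ⬝ᵥ ·) h

theorem Matrix.PosDef.map_ofReal {H : Matrix n n ℝ} (hH : H.PosDef) :
    (H.map (algebraMap ℝ ℂ)).PosDef := by
  refine posDef_iff_dotProduct_mulVec.mpr
    ⟨hH.1.map _ fun r ↦ by simp, fun x hx ↦ ?_⟩
  set a := fun i ↦ (x i).re
  set b := fun i ↦ (x i).im
  have hsymm : b ⬝ᵥ H *ᵥ a = a ⬝ᵥ H *ᵥ b := by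
    have hT : H.IsSymm := by simpa using hH.1
    rw [dotProduct_mulVec, ← mulVec_transpose, hT.eq, dotProduct_comm]
  have key : star x ⬝ᵥ H.map (algebraMap ℝ ℂ) *ᵥ x = ((a ⬝ᵥ H *ᵥ a + b ⬝ᵥ H *ᵥ b : ℝ) : ℂ) := by
    apply Complex.ext
    · simp [dotProduct, mulVec, Complex.re_sum, Finset.mul_sum, Finset.sum_add_distrib, a, b]
    · calc _ = a ⬝ᵥ H *ᵥ b - b ⬝ᵥ H *ᵥ a := by
            simp [dotProduct, mulVec, Complex.im_sum, Finset.mul_sum, Finset.sum_add_distrib,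
              sub_eq_add_neg, a, b]
        _ = _ := by simp [hsymm]
  have hpos : ∀ u : n → ℝ, u ≠ 0 → 0 < u ⬝ᵥ H *ᵥ u := fun u hu ↦ by
    simpa using hH.dotProduct_mulVec_pos hu
  have hnonneg : ∀ u : n → ℝ, 0 ≤ u ⬝ᵥ H *ᵥ u := fun u ↦ by
    simpa using hH.posSemidef.dotProduct_mulVec_nonneg u
  rw [key, Complex.zero_lt_real]
  by_cases ha : a = 0
  · have hb : b ≠ 0 := fun hb ↦ hx (funext fun i ↦ Complex.ext (congrFun ha i) (congrFun hb i))
    linarith [hnonneg a, hpos b hb]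
  · linarith [hpos a ha, hnonneg b]

variable [DecidableEq n]

theorem Matrix.exists_mulVec_eq_smul_of_mem_spectrum {K : Type*} [Field K] {M : Matrix n n K}
    {z : K} (hz : z ∈ spectrum K M) : ∃ v ≠ 0, M *ᵥ v = z • v := by
  rw [← spectrum_toLin', ← Module.End.hasEigenvalue_iff_mem_spectrum] at hz
  obtain ⟨v, hv⟩ := hz.exists_hasEigenvector
  exact ⟨v, hv.2, by simpa using hv.apply_eq_smul⟩

theorem isHurwitz_iff_spectrum {M : Matrix n n ℝ} :
    IsHurwitz M ↔ ∀ z ∈ spectrum ℂ (M.map (algebraMap ℝ ℂ)), z.re < 0 := by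
  simp only [IsHurwitz, mem_spectrum_iff_isRoot_charpoly,
    Polynomial.mem_roots (charpoly_monic _).ne_zero]

theorem IsHurwitz.smul {M : Matrix n n ℝ} (hM : IsHurwitz M) {c : ℝ} (hc : 0 < c) :
    IsHurwitz (c • M) := by
  rw [isHurwitz_iff_spectrum] at hM ⊢
  have hmap : (c • M).map (algebraMap ℝ ℂ)
      = Units.mk0 (c : ℂ) (by exact_mod_cast hc.ne') • M.map (algebraMap ℝ ℂ) := by
    ext i j; simp
  rw [hmap, spectrum.unit_smul_eq_smul]
  rintro _ ⟨w, hw, rfl⟩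
  simpa using mul_neg_of_pos_of_neg hc (hM w hw)

theorem IsHurwitz.fromBlocks_zero₁₂ {m : Type} [Fintype m] [DecidableEq m] {A : Matrix n n ℝ}
    {D : Matrix m m ℝ} (hA : IsHurwitz A) (hD : IsHurwitz D) (B : Matrix m n ℝ) :
    IsHurwitz (fromBlocks A 0 B D) := by
  intro z hz
  rw [fromBlocks_map, Matrix.map_zero _ (map_zero _), charpoly_fromBlocks_zero₁₂,
    Polynomial.roots_mul ((charpoly_monic _).mul (charpoly_monic _)).ne_zero,
    Multiset.mem_add] at hz
  exact hz.elim (hA z) (hD z)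

theorem isHurwitz_neg_diagonal {d : n → ℝ} (hd : ∀ i, 0 < d i) : IsHurwitz (-diagonal d) := by
  have hmap : (-diagonal d).map (algebraMap ℝ ℂ) = diagonal fun i ↦ ((-d i : ℝ) : ℂ) := by
    ext i j; by_cases hij : i = j <;> simp [hij]
  rw [isHurwitz_iff_spectrum, hmap, spectrum_diagonal]
  rintro _ ⟨i, rfl⟩
  simpa using hd i

theorem isHurwitz_fromBlocks_zero_neg_diagonal {k m w : n → ℝ} (hk : ∀ i, 0 < k i)
    (hm : ∀ i, 0 < m i) (hw : ∀ i, 0 < w i) {H : Matrix n n ℝ} (hH : H.PosDef) :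
    IsHurwitz (fromBlocks 0 (-diagonal k) (diagonal m * H) (-diagonal w)) := by
  rw [isHurwitz_iff_spectrum]
  intro z hz
  obtain ⟨v, hv, hMv⟩ := exists_mulVec_eq_smul_of_mem_spectrum hz
  rw [fromBlocks_map, Matrix.map_mul] at hMv
  set Hc := H.map (algebraMap ℝ ℂ)
  set x := v ∘ Sum.inl
  set y := v ∘ Sum.inr
  have hx_eq : ∀ i, -(k i * y i) = z * x i := fun i ↦ by
    simpa [fromBlocks_mulVec, mulVec_diagonal, x, y] using
      congrFun hMv (Sum.inl i)
  have hy_eq : ∀ i, m i * (Hc *ᵥ x) i - w i * y i = z * y i := fun i ↦ by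
    simpa [fromBlocks_mulVec, ← mulVec_mulVec, mulVec_diagonal, sub_eq_add_neg, x, y] using
      congrFun hMv (Sum.inr i)
  have hx : x ≠ 0 := by
    intro hx0
    apply hv
    ext (i | i)
    · exact congrFun hx0 i
    · have hk0 : (k i : ℂ) ≠ 0 := by exact_mod_cast (hk i).ne'
      simpa [hx0, hk0, y] using hx_eq i
  -- `z² xᵢ + wᵢ z xᵢ + kᵢ mᵢ (H x)ᵢ = 0`, divided by `kᵢ mᵢ` to make the coefficients Hermitian
  refine re_neg_of_mulVec_quadratic_eq_zero
    (P := diagonal fun i ↦ ((k i * m i)⁻¹ : ℝ)) (Q := diagonal fun i ↦ (w i / (k i * m i) : ℝ))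
    (.diagonal fun i ↦ ?_) (.diagonal fun i ↦ ?_) hH.map_ofReal hx ?_
  · exact Complex.zero_lt_real.mpr (inv_pos.mpr (mul_pos (hk i) (hm i)))
  · exact Complex.zero_lt_real.mpr (div_pos (hw i) (mul_pos (hk i) (hm i)))
  funext i
  have hk0 : (k i : ℂ) ≠ 0 := by exact_mod_cast (hk i).ne'
  have hm0 : (m i : ℂ) ≠ 0 := by exact_mod_cast (hm i).ne'
  simp only [add_mulVec, smul_mulVec, mulVec_diagonal, Pi.add_apply, Pi.smul_apply, smul_eq_mul,
    Pi.zero_apply]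
  push_cast
  field_simp
  linear_combination -(z + w i) * hx_eq i + k i * hy_eq i

end

theorem averaged_jacobian_hurwitz
    (δ ε kv kβ ωlv ωlβ ωhv ωhβ γv γβ av aβ : ℝ)
    (hδ : 0 < δ) (hε : 0 < ε) (hkv : 0 < kv) (hkβ : 0 < kβ)
    (hωlv : 0 < ωlv) (hωlβ : 0 < ωlβ) (hωhv : 0 < ωhv) (hωhβ : 0 < ωhβ)
    (hγv : 0 < γv) (hγβ : 0 < γβ) (hav : 0 < av) (haβ : 0 < aβ)
    (H : Matrix (Fin 2) (Fin 2) ℝ) (hH : H.PosDef)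
    (B : Matrix (Fin 4) (Fin 2 ⊕ Fin 2) ℝ)
    (A : Matrix (Fin 2 ⊕ Fin 2) (Fin 2 ⊕ Fin 2) ℝ)
    (hA : A = Matrix.fromBlocks 0 (-((1 / Real.sqrt ε) • Matrix.diagonal ![kv, kβ]))
        ((1 / 2 : ℝ) • (Matrix.diagonal ![ωlv * av, ωlβ * aβ] * H))
        (-(Matrix.diagonal ![ωlv, ωlβ]))) :
    IsHurwitz (δ • Matrix.fromBlocks A 0 B (-(Matrix.diagonal ![ωhv, ωhβ, γv, γβ]))) := by
  have hA' : A = fromBlocks 0 (-diagonal ![kv / √ε, kβ / √ε])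
      (diagonal ![ωlv * av / 2, ωlβ * aβ / 2] * H) (-diagonal ![ωlv, ωlβ]) := by
    rw [hA, ← diagonal_smul, ← smul_mul_assoc, ← diagonal_smul]
    congr 4 <;> ext i <;> fin_cases i <;> simp [div_eq_inv_mul, mul_comm]
  subst hA'
  refine IsHurwitz.smul (IsHurwitz.fromBlocks_zero₁₂ ?_ ?_ B) hδ
  · refine isHurwitz_fromBlocks_zero_neg_diagonal ?_ ?_ ?_ hH <;> intro i <;> fin_cases i <;>
      simp <;> positivity
  · refine isHurwitz_neg_diagonal fun i ↦ ?_
    fin_cases i <;> simpa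
end
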